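/- Let N ≥ 1 and let (Q_i)_{i∈I} be a family of closed axis-parallel cubes in ℝ^N, Q_i = ∏_{j=1}^N [c_{i,j}, c_{i,j} + l_i] with side lengths l_i > 0, whose interiors are pairwise disjoint, and such that whenever i ≠ j and Q_i ∩ Q_j ≠ ∅, the side lengths satisfy l_j = l_i or l_j = 2·l_i or l_j = l_i/2. Then for every i ∈ I, the set { j ∈ I : j ≠ i and Q_i ∩ Q_j ≠ ∅ } is finite with at most 4^N − 2^N elements. -/

import Mathlib

open MeasureTheory Set
open scoped ENNReal

/-!
Fix a cube `Q i` of side `L`. Every neighbour `Q j` has side at least `L / 2`, so it contains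
a cube of side `L / 2` in its interior lying within distance `L / 2` of `Q i`. These small
cubes and the interior of `Q i` are pairwise disjoint and all lie in the concentric cube of
side `2 L`; comparing volumes gives `n (L/2)^N + L^N ≤ (2L)^N`, i.e. `n ≤ 4^N - 2^N`.
-/

theorem Set.finite_and_ncard_le_of_forall_finset_card_le {α : Type*} {s : Set α} {n : ℕ}
    (h : ∀ t : Finset α, (t : Set α) ⊆ s → t.card ≤ n) : s.Finite ∧ s.ncard ≤ n := by
  have hfin : s.Finite := by
    by_contra hinf
    obtain ⟨t, hts, hcard⟩ := Set.Infinite.exists_subset_card_eq hinf (n + 1)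
    have := h t hts
    omega
  refine ⟨hfin, ?_⟩
  rw [ncard_eq_toFinset_card _ hfin]
  exact h _ (by simp)

theorem card_mul_add_measure_le {α ι : Type*} [MeasurableSpace α] (μ : Measure α)
    {T : Finset ι} {B : ι → Set α} {A E : Set α} {v : ℝ≥0∞}
    (hBE : ∀ j ∈ T, B j ⊆ E) (hAE : A ⊆ E) (hB : (T : Set ι).PairwiseDisjoint B)
    (hBA : ∀ j ∈ T, Disjoint (B j) A) (hmB : ∀ j ∈ T, MeasurableSet (B j))
    (hμB : ∀ j ∈ T, μ (B j) = v) : T.card * v + μ A ≤ μ E := by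
  calc T.card * v + μ A = μ (⋃ j ∈ T, B j) + μ A := by
        rw [measure_biUnion_finset hB hmB, Finset.sum_congr rfl hμB, Finset.sum_const,
          nsmul_eq_mul]
    _ = μ ((⋃ j ∈ T, B j) ∪ A) :=
        (measure_union' (disjoint_iUnion₂_left.mpr hBA)
          (T.measurableSet_biUnion hmB)).symm
    _ ≤ μ E := measure_mono (union_subset (iUnion₂_subset hBE) hAE)

section Cube

variable {ι : Type*}

def openCube (c : ι → ℝ) (r : ℝ) : Set (ι → ℝ) := univ.pi fun k => Ioo (c k) (c k + r)

def closedCube (c : ι → ℝ) (r : ℝ) : Set (ι → ℝ) := univ.pi fun k => Icc (c k) (c k + r)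

theorem measurableSet_openCube [Countable ι] (c : ι → ℝ) (r : ℝ) :
    MeasurableSet (openCube c r) :=
  .univ_pi fun _ => measurableSet_Ioo

theorem volume_openCube [Fintype ι] (c : ι → ℝ) (r : ℝ) :
    volume (openCube c r) = ENNReal.ofReal r ^ Fintype.card ι := by
  simp [openCube, volume_pi_pi, Real.volume_Ioo]

theorem openCube_subset_openCube {c c' : ι → ℝ} {r r' : ℝ} (h₁ : ∀ k, c' k ≤ c k)
    (h₂ : ∀ k, c k + r ≤ c' k + r') : openCube c r ⊆ openCube c' r' :=
  pi_mono fun k _ => Ioo_subset_Ioo (h₁ k) (h₂ k)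

theorem exists_openCube_subset_of_mem_closedCube {c c' x : ι → ℝ} {L l s : ℝ}
    (hx : x ∈ closedCube c L) (hx' : x ∈ closedCube c' l) (hs₀ : 0 ≤ s) (hs : s ≤ l) :
    ∃ a, openCube a s ⊆ openCube c' l ∧
      openCube a s ⊆ openCube (fun k => c k - s) (L + 2 * s) := by
  -- the cube with corner `x`, pushed back into `closedCube c' l` along the axes where it sticks out
  refine ⟨fun k => min (x k) (c' k + l - s), openCube_subset_openCube (fun k => ?_) (fun k => ?_),
    openCube_subset_openCube (fun k => ?_) (fun k => ?_)⟩
  all_goals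
    obtain ⟨hxc, hxc'⟩ := hx k (mem_univ k)
    obtain ⟨hxd, hxd'⟩ := hx' k (mem_univ k)
    grind

end Cube

theorem le_four_pow_sub_two_pow_of_cube_volumes {n N : ℕ} {s : ℝ} (hs : 0 < s)
    (h : n * ENNReal.ofReal s ^ N + ENNReal.ofReal (2 * s) ^ N ≤ ENNReal.ofReal (4 * s) ^ N) :
    n ≤ 4 ^ N - 2 ^ N := by
  rw [ENNReal.ofReal_mul zero_le_two, ENNReal.ofReal_mul zero_le_four, mul_pow, mul_pow,
    ← add_mul, ENNReal.ofReal_ofNat, ENNReal.ofReal_ofNat] at h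
  have h' : ((n + 2 ^ N : ℕ) : ℝ≥0∞) ≤ (4 ^ N : ℕ) := by
    push_cast
    exact (ENNReal.mul_le_mul_iff_left (by positivity) (by simp)).mp h
  have := Nat.cast_le.mp h'
  omega

theorem stmt18 (N : ℕ) {I : Type*} (c : I → Fin N → ℝ) (l : I → ℝ)
    (hl : ∀ i, 0 < l i)
    (Q : I → Set (Fin N → ℝ))
    (hQ : ∀ i, Q i = Set.univ.pi fun j => Set.Icc (c i j) (c i j + l i))
    (hdisj : ∀ i j, i ≠ j →
      (Set.univ.pi fun j' => Set.Ioo (c i j') (c i j' + l i)) ∩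
        (Set.univ.pi fun j' => Set.Ioo (c j j') (c j j' + l j)) = ∅)
    (hside : ∀ i j, i ≠ j → (Q i ∩ Q j).Nonempty →
      l j = l i ∨ l j = 2 * l i ∨ l j = l i / 2) :
    ∀ i, ({j | j ≠ i ∧ (Q i ∩ Q j).Nonempty}).Finite ∧
      ({j | j ≠ i ∧ (Q i ∩ Q j).Nonempty}).ncard ≤ 4 ^ N - 2 ^ N := by
  intro i
  have hs : 0 < l i / 2 := half_pos (hl i)
  refine Set.finite_and_ncard_le_of_forall_finset_card_le fun T hT => ?_
  have hcorner : ∀ j ∈ {j | j ≠ i ∧ (Q i ∩ Q j).Nonempty}, ∃ a,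
      openCube a (l i / 2) ⊆ openCube (c j) (l j) ∧
      openCube a (l i / 2) ⊆ openCube (fun k => c i k - l i / 2) (l i + 2 * (l i / 2)) := by
    rintro j ⟨hji, hmeet⟩
    have hlj : l i / 2 ≤ l j := by
      rcases hside i j hji.symm hmeet with h | h | h <;> linarith [hl i]
    obtain ⟨x, hxi, hxj⟩ := hmeet
    rw [hQ] at hxi hxj
    exact exists_openCube_subset_of_mem_closedCube hxi hxj hs.le hlj
  choose! a haQ haE using hcorner
  have hpack := card_mul_add_measure_le volume (B := fun j => openCube (a j) (l i / 2))
    (A := openCube (c i) (l i)) (fun j hj => haE j (hT hj))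
    (openCube_subset_openCube (fun k => by linarith) (fun k => by linarith))
    (fun j hj j' hj' hne => (disjoint_iff_inter_eq_empty.2 (hdisj j j' hne)).mono
      (haQ j (hT hj)) (haQ j' (hT hj')))
    (fun j hj => (disjoint_iff_inter_eq_empty.2 (hdisj j i (hT hj).1)).mono_left (haQ j (hT hj)))
    (fun j _ => measurableSet_openCube _ _) (fun j _ => volume_openCube _ _)
  rw [volume_openCube, volume_openCube, Fintype.card_fin] at hpack
  refine le_four_pow_sub_two_pow_of_cube_volumes hs ?_
  convert hpack using 4 <;> ring
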